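/- Let T > 0, C > 0, 0 < α ≤ 2 and M ≥ 0. Suppose E : [0,T] → ℝ is differentiable, E(t) ≥ 0 for all t ∈ [0,T], dE/dt(t) ≤ C·E(t)^α for all t ∈ [0,T], and ∫₀ᵀ E(t) dt ≤ M. Then for every t ∈ [0,T], E(t) ≤ (1 + E(0))·exp(C·(T + M)); in particular E remains bounded on [0,T] and cannot blow up. -/

import Mathlib

/-!
Since `E ^ α ≤ (1 + E) ^ 2` for `0 ≤ α ≤ 2`, the function `u = 1 + E` satisfies
`u' ≤ C u · u`, a linear differential inequality with rate `C u`. Grönwall's inequality gives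
`u t ≤ u 0 · exp (C ∫₀ᵗ u)`, and `∫₀ᵗ u ≤ T + M` by the a priori bound on `∫₀ᵀ E`.
-/

open Set Real intervalIntegral
open MeasureTheory (volume ae_restrict_of_forall_mem)

theorem rpow_le_one_add_sq {x α : ℝ} (hx : 0 ≤ x) (hα₀ : 0 ≤ α) (hα₂ : α ≤ 2) :
    x ^ α ≤ (1 + x) ^ 2 :=
  calc x ^ α ≤ (1 + x) ^ α := rpow_le_rpow hx (by linarith) hα₀
    _ ≤ (1 + x) ^ (2 : ℝ) := rpow_le_rpow_of_exponent_le (by linarith) hα₂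
    _ = (1 + x) ^ 2 := rpow_two _

theorem le_mul_exp_integral_of_deriv_le_mul {u g : ℝ → ℝ} {a b : ℝ}
    (hu : ContinuousOn u (Icc a b)) (hdiff : ∀ x ∈ Ioo a b, DifferentiableAt ℝ u x)
    (hg : ContinuousOn g (Icc a b)) (hderiv : ∀ x ∈ Ioo a b, deriv u x ≤ g x * u x) :
    ∀ t ∈ Icc a b, u t ≤ u a * exp (∫ s in a..t, g s) := by
  intro t ht
  have hab : a ≤ b := ht.1.trans ht.2
  set G : ℝ → ℝ := fun y => ∫ s in a..y, g s
  have hG : ContinuousOn G (Icc a b) := by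
    simpa only [uIcc_of_le hab] using
      continuousOn_primitive_interval (hg.integrableOn_compact isCompact_Icc |>.mono_set
        (uIcc_of_le hab).subset)
  have hG' : ∀ x ∈ Ioo a b, HasDerivAt G (g x) x := fun x hx =>
    integral_hasDerivAt_right
      ((hg.mono (Icc_subset_Icc le_rfl hx.2.le)).intervalIntegrable_of_Icc hx.1.le)
      ((hg.mono Ioo_subset_Icc_self).stronglyMeasurableAtFilter isOpen_Ioo x hx)
      (hg.continuousAt (Icc_mem_nhds hx.1 hx.2))
  -- The integrating factor `exp (-G)` turns `u' ≤ g u` into monotonicity.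
  have hv : AntitoneOn (fun y => u y * exp (-G y)) (Icc a b) := by
    refine antitoneOn_of_hasDerivWithinAt_nonpos (convex_Icc a b) (hu.mul hG.neg.rexp)
      (f' := fun x => deriv u x * exp (-G x) + u x * (exp (-G x) * -g x))
      (fun x hx => ?_) (fun x hx => ?_)
    all_goals rw [interior_Icc] at hx
    · exact ((hdiff x hx).hasDerivAt.mul (hG' x hx).neg.exp).hasDerivWithinAt
    · have := hderiv x hx
      have := exp_pos (-G x)
      nlinarith
  have hvt := hv (left_mem_Icc.2 hab) ht ht.1
  simp only [G, integral_same, neg_zero, exp_zero, mul_one] at hvt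
  calc u t = u t * exp (-G t) * exp (G t) := by rw [mul_assoc, ← exp_add]; simp
    _ ≤ u a * exp (G t) := by gcongr

theorem enstrophy_no_blowup_low_exponent_general
    (T C α M : ℝ) (hC : 0 < C) (hα₁ : 0 < α) (hα₂ : α ≤ 2)
    (E : ℝ → ℝ)
    (hdiff : ∀ t ∈ Icc (0 : ℝ) T, DifferentiableAt ℝ E t)
    (hnonneg : ∀ t ∈ Icc (0 : ℝ) T, 0 ≤ E t)
    (hineq : ∀ t ∈ Icc (0 : ℝ) T, deriv E t ≤ C * E t ^ α)
    (hint : (∫ t in (0 : ℝ)..T, E t) ≤ M) :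
    ∀ t ∈ Icc (0 : ℝ) T, E t ≤ (1 + E 0) * Real.exp (C * (T + M)) := by
  intro t ht
  have hT : 0 ≤ T := ht.1.trans ht.2
  have hE : ContinuousOn E (Icc 0 T) := fun x hx => (hdiff x hx).continuousAt.continuousWithinAt
  have hEint : ∀ s ∈ Icc (0 : ℝ) T, IntervalIntegrable E volume 0 s := fun s hs =>
    (hE.mono (Icc_subset_Icc le_rfl hs.2)).intervalIntegrable_of_Icc hs.1
  have hderiv : ∀ x ∈ Ioo 0 T, deriv (fun s => 1 + E s) x ≤ C * (1 + E x) * (1 + E x) := by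
    intro x hx
    have hx' := Ioo_subset_Icc_self hx
    calc deriv (fun s => 1 + E s) x = deriv E x := deriv_const_add 1
      _ ≤ C * E x ^ α := hineq x hx'
      _ ≤ C * (1 + E x) ^ 2 := by gcongr; exact rpow_le_one_add_sq (hnonneg x hx') hα₁.le hα₂
      _ = C * (1 + E x) * (1 + E x) := by ring
  have hgronwall := le_mul_exp_integral_of_deriv_le_mul (continuousOn_const.add hE)
    (fun x hx => (hdiff x (Ioo_subset_Icc_self hx)).const_add 1)
    (continuousOn_const.mul (continuousOn_const.add hE)) hderiv t ht
  have hEt : ∫ s in (0 : ℝ)..t, E s ≤ M :=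
    (integral_mono_interval le_rfl ht.1 ht.2
      (ae_restrict_of_forall_mem measurableSet_Ioc fun s hs => hnonneg s (Ioc_subset_Icc_self hs))
      (hEint T (right_mem_Icc.2 hT))).trans hint
  have hrate : ∫ s in (0 : ℝ)..t, C * (1 + E s) ≤ C * (T + M) := by
    rw [integral_const_mul, integral_add intervalIntegrable_const (hEint t ht), integral_const,
      smul_eq_mul, sub_zero, mul_one]
    gcongr
    exact ht.2
  calc E t ≤ 1 + E t := by linarith
    _ ≤ (1 + E 0) * exp (∫ s in (0 : ℝ)..t, C * (1 + E s)) := hgronwall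
    _ ≤ (1 + E 0) * exp (C * (T + M)) := by
      have := hnonneg 0 (left_mem_Icc.2 hT)
      gcongr

/-- A sustained amplification rate `dE/dt ≤ C E^α` with `0 < α ≤ 2`, together with an
a priori bound on `∫₀ᵀ E`, precludes finite-time blow-up:
`E(t) ≤ (1 + E(0)) exp(C (T + M))` on `[0,T]`. -/
theorem enstrophy_no_blowup_low_exponent
    (T C α M : ℝ) (hT : 0 < T) (hC : 0 < C) (hα₁ : 0 < α) (hα₂ : α ≤ 2) (hM : 0 ≤ M)
    (E : ℝ → ℝ)
    (hdiff : ∀ t ∈ Icc (0 : ℝ) T, DifferentiableAt ℝ E t)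
    (hnonneg : ∀ t ∈ Icc (0 : ℝ) T, 0 ≤ E t)
    (hineq : ∀ t ∈ Icc (0 : ℝ) T, deriv E t ≤ C * E t ^ α)
    (hint : (∫ t in (0 : ℝ)..T, E t) ≤ M) :
    ∀ t ∈ Icc (0 : ℝ) T, E t ≤ (1 + E 0) * Real.exp (C * (T + M)) :=
  enstrophy_no_blowup_low_exponent_general T C α M hC hα₁ hα₂ E hdiff hnonneg hineq hint
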